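/- Let p/q be a positive irreducible fraction with p even and p, q > 0. Then size(M(p/q)) < size(p/q), where M is the mother map and size(p/q) = p + q for the irreducible representation with non-negative numerator and positive denominator (size(1/0) = 1). -/

import Mathlib

/-!
The map `x ↦ cfFold l x` is `ℤ`-linear, so lowering the last partial quotient by `2` gives
`cfPair (l ++ [a - 2]) = cfPair (l ++ [a]) - 2 • cfPair l`. Since all partial quotients of a
standard expansion are non-negative, `cfPair l` has non-negative entries and size at least `1`,
so the size drops by at least `2`.
-/

/-- Evaluate the continued fraction `[a_0, …, a_{n-1}, x]` projectively:
the pair `(u, w)` represents the fraction `u/w` (with `(±1, 0)` representing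
`∞`), and `[a, rest] = a + 1/rest` corresponds to `(u,w) ↦ (a*u + w, u)`. -/
def cfFold (l : List ℤ) (x : ℤ × ℤ) : ℤ × ℤ :=
  l.foldr (fun a y => (a * y.1 + y.2, y.1)) x

/-- The coprime pair `(numerator, denominator)` of the continued fraction
`[a_0, …, a_n]`; the empty continued fraction is `∞ = (1, 0)`. -/
def cfPair (l : List ℤ) : ℤ × ℤ :=
  cfFold l (1, 0)

/-- The rational number represented by a pair. -/
def pairQ (x : ℤ × ℤ) : ℚ :=
  (x.1 : ℚ) / (x.2 : ℚ)

/-- The value of the continued fraction `[a_0, …, a_n]` as a rational number. -/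
def cfVal (l : List ℤ) : ℚ :=
  pairQ (cfPair l)

/-- `l = [a_0, …, a_n]` is a standard continued fraction expansion:
`a_0 ≥ 0`, `a_i ≥ 1` for `1 ≤ i ≤ n`, and `a_n ≥ 2`. -/
def IsStdCF (l : List ℤ) : Prop :=
  l ≠ [] ∧ 0 ≤ l.head! ∧ (∀ b ∈ l.tail, 1 ≤ b) ∧ 2 ≤ l.getLast!

lemma cfFold_cons (a : ℤ) (t : List ℤ) (x : ℤ × ℤ) :
    cfFold (a :: t) x = (a * (cfFold t x).1 + (cfFold t x).2, (cfFold t x).1) := rfl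

lemma cfFold_sub (l : List ℤ) (x y : ℤ × ℤ) :
    cfFold l (x - y) = cfFold l x - cfFold l y := by
  induction l with
  | nil => rfl
  | cons a t ih =>
    simp only [cfFold_cons, ih, Prod.fst_sub, Prod.snd_sub, Prod.mk_sub_mk]
    ext <;> ring

lemma cfFold_smul (l : List ℤ) (c : ℤ) (x : ℤ × ℤ) :
    cfFold l (c • x) = c • cfFold l x := by
  induction l with
  | nil => rfl
  | cons a t ih =>
    simp only [cfFold_cons, ih, Prod.smul_fst, Prod.smul_snd, Prod.smul_mk, smul_eq_mul]
    ext <;> ring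

lemma cfPair_append_singleton (l : List ℤ) (a : ℤ) : cfPair (l ++ [a]) = cfFold l (a, 1) := by
  simp [cfPair, cfFold, List.foldr_append]

lemma cfPair_append_sub_two (l : List ℤ) (a : ℤ) :
    cfPair (l ++ [a - 2]) = cfPair (l ++ [a]) - (2 : ℤ) • cfPair l := by
  have hx : ((a - 2, 1) : ℤ × ℤ) = (a, 1) - (2 : ℤ) • (1, 0) := by ext <;> simp
  rw [cfPair_append_singleton, cfPair_append_singleton, hx, cfFold_sub, cfFold_smul, cfPair]

lemma IsStdCF.nonneg_of_mem {l : List ℤ} (hl : IsStdCF l) {b : ℤ} (hb : b ∈ l) : 0 ≤ b := by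
  obtain ⟨hne, hhead, htail, -⟩ := hl
  cases l with
  | nil => exact absurd rfl hne
  | cons c t =>
    rcases List.mem_cons.1 hb with rfl | hb
    · exact hhead
    · exact zero_le_one.trans (htail b hb)

section NonnegQuotients

variable {l : List ℤ} (hl : ∀ b ∈ l, 0 ≤ b)
include hl

lemma cfFold_nonneg {x : ℤ × ℤ} (hx : 0 ≤ x) : 0 ≤ cfFold l x := by
  induction l with
  | nil => exact hx
  | cons a t ih =>
    have ht := ih fun b hb => hl b (List.mem_cons_of_mem a hb)
    have ha := hl a List.mem_cons_self
    rw [cfFold_cons]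
    exact ⟨add_nonneg (mul_nonneg ha ht.1) ht.2, ht.1⟩

lemma add_le_cfFold_add {x : ℤ × ℤ} (hx : 0 ≤ x) :
    x.1 + x.2 ≤ (cfFold l x).1 + (cfFold l x).2 := by
  induction l with
  | nil => exact le_rfl
  | cons a t ih =>
    have ht : ∀ b ∈ t, 0 ≤ b := fun b hb => hl b (List.mem_cons_of_mem a hb)
    have hau : 0 ≤ a * (cfFold t x).1 :=
      mul_nonneg (hl a List.mem_cons_self) (cfFold_nonneg ht hx).1
    rw [cfFold_cons]
    linarith [ih ht]

end NonnegQuotients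

theorem size_mother_lt_general (p q : ℤ)
    (l : List ℤ) (a : ℤ) (hstd : IsStdCF (l ++ [a]))
    (hval : cfPair (l ++ [a]) = (p, q)) :
    (cfPair (l ++ [a - 2])).1 + (cfPair (l ++ [a - 2])).2 < p + q := by
  have hl : ∀ b ∈ l, 0 ≤ b := fun b hb => hstd.nonneg_of_mem (List.mem_append_left _ hb)
  have hsize : 1 ≤ (cfPair l).1 + (cfPair l).2 :=
    add_le_cfFold_add hl (x := (1, 0)) (by simp [Prod.le_def])
  rw [cfPair_append_sub_two, hval]
  simp only [Prod.fst_sub, Prod.snd_sub, Prod.smul_fst, Prod.smul_snd, smul_eq_mul]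
  linarith

/-- (Size decrease of the mother.)  Let `p/q` be a positive irreducible
fraction with `p` even, with standard continued fraction expansion
`l ++ [a]`.  The size of a non-negative irreducible fraction is
numerator plus denominator; then `size (M(p/q)) < size (p/q)`, where the
mother `M(p/q) = [a_0, …, a_{n-1}, a_n - 2]` is given in lowest terms by
`cfPair (l ++ [a-2])`. -/
theorem size_mother_lt (p q : ℤ) (hp : 0 < p) (hq : 0 < q)
    (hco : Int.gcd p q = 1) (hev : 2 ∣ p)
    (l : List ℤ) (a : ℤ) (hstd : IsStdCF (l ++ [a]))
    (hval : cfPair (l ++ [a]) = (p, q)) :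
    (cfPair (l ++ [a - 2])).1 + (cfPair (l ++ [a - 2])).2 < p + q :=
  size_mother_lt_general p q l a hstd hval
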